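/- Let m₁, m₂ be positive integers and let q, q̄, p be smooth matrix-valued functions on ℝ² (variables (x,t)) of sizes m₁×m₂, m₂×m₁, m₁×m₁, satisfying the matrix NLS system q_t = q_{xx} − 2 q q̄ q, q̄_t = −q̄_{xx} + 2 q̄ q q̄, together with p_x = −q q̄. For any constant ν ∈ ℂ define the block matrices L = [[ν I_{m₁}, q], [q̄, 0]] and M = [[ν² I_{m₁} + q q̄ + 2 p_x, ν q + q_x], [ν q̄ − q̄_x, q̄ q]]. Then the zero-curvature equation L_t − M_x = [M, L] holds identically, i.e., L and M constitute a Lax pair for the matrix NLS system. -/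

import Mathlib

open Matrix

noncomputable section

/-- Entrywise partial derivative with respect to the first variable. -/
def pd1 {α β : Type*} (M : ℝ → ℝ → Matrix α β ℂ) : ℝ → ℝ → Matrix α β ℂ :=
  fun x t => Matrix.of fun i j => deriv (fun x' => M x' t i j) x

/-- Entrywise partial derivative with respect to the second variable. -/
def pd2 {α β : Type*} (M : ℝ → ℝ → Matrix α β ℂ) : ℝ → ℝ → Matrix α β ℂ :=
  fun x t => Matrix.of fun i j => deriv (fun t' => M x t' i j) t

/-- Entrywise smoothness of a matrix-valued function on ℝ². -/
def MSmooth {α β : Type*} (M : ℝ → ℝ → Matrix α β ℂ) : Prop :=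
  ∀ i j, ContDiff ℝ (⊤ : ℕ∞) fun v : ℝ × ℝ => M v.1 v.2 i j

/-! The zero-curvature identity is checked block by block: after substituting the NLS system
for `q_t`, `q̄_t` and `-q q̄` for `p_x`, both sides are noncommutative polynomials in
`q, q̄, q_x, q̄_x, q_xx, q̄_xx` and `ν`, and agree identically. The only analysis needed is the
Leibniz rule for the entrywise `x`-derivative of matrix products. -/

namespace MatrixNLS

variable {α β γ δ : Type*}

def DifferentiableFst (M : ℝ → ℝ → Matrix α β ℂ) : Prop :=
  ∀ (t : ℝ) (i : α) (j : β), Differentiable ℝ fun x => M x t i j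

namespace DifferentiableFst

theorem const (C : Matrix α β ℂ) : DifferentiableFst fun _ _ => C :=
  fun _ _ _ => differentiable_const _

theorem smul (c : ℂ) {A : ℝ → ℝ → Matrix α β ℂ} (hA : DifferentiableFst A) :
    DifferentiableFst fun x t => c • A x t := by
  intro t i j
  simp only [Matrix.smul_apply, smul_eq_mul]
  exact (hA t i j).const_mul c

theorem mul [Fintype β] {A : ℝ → ℝ → Matrix α β ℂ} {B : ℝ → ℝ → Matrix β γ ℂ}
    (hA : DifferentiableFst A) (hB : DifferentiableFst B) :
    DifferentiableFst fun x t => A x t * B x t := by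
  intro t i j
  simp only [Matrix.mul_apply]
  exact Differentiable.fun_sum fun k _ => (hA t i k).mul (hB t k j)

end DifferentiableFst

theorem MSmooth.contDiff_fst {M : ℝ → ℝ → Matrix α β ℂ} (h : MSmooth M) (t : ℝ) (i : α)
    (j : β) : ContDiff ℝ (⊤ : ℕ∞) fun x => M x t i j :=
  (h i j).comp (contDiff_id.prodMk contDiff_const)

theorem MSmooth.differentiableFst {M : ℝ → ℝ → Matrix α β ℂ} (h : MSmooth M) :
    DifferentiableFst M :=
  fun t i j => (MSmooth.contDiff_fst h t i j).differentiable (by simp)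

theorem MSmooth.differentiableFst_pd1 {M : ℝ → ℝ → Matrix α β ℂ} (h : MSmooth M) :
    DifferentiableFst (pd1 M) := fun t i j =>
  ((contDiff_infty_iff_deriv.mp (MSmooth.contDiff_fst h t i j)).2).differentiable (by simp)

section Derivatives

variable {x t : ℝ}

@[simp]
theorem pd1_const (C : Matrix α β ℂ) : pd1 (fun _ _ => C) x t = 0 := by
  ext i j; simp [pd1]

@[simp]
theorem pd2_const (C : Matrix α β ℂ) : pd2 (fun _ _ => C) x t = 0 := by
  ext i j; simp [pd2]

theorem pd1_add {A B : ℝ → ℝ → Matrix α β ℂ} (hA : DifferentiableFst A)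
    (hB : DifferentiableFst B) : pd1 (fun x t => A x t + B x t) x t = pd1 A x t + pd1 B x t := by
  ext i j
  exact deriv_add (hA t i j x) (hB t i j x)

theorem pd1_sub {A B : ℝ → ℝ → Matrix α β ℂ} (hA : DifferentiableFst A)
    (hB : DifferentiableFst B) : pd1 (fun x t => A x t - B x t) x t = pd1 A x t - pd1 B x t := by
  ext i j
  exact deriv_sub (hA t i j x) (hB t i j x)

theorem pd1_smul (c : ℂ) (A : ℝ → ℝ → Matrix α β ℂ) :
    pd1 (fun x t => c • A x t) x t = c • pd1 A x t := by
  ext i j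
  exact deriv_const_mul_field c

theorem pd1_mul [Fintype β] {A : ℝ → ℝ → Matrix α β ℂ} {B : ℝ → ℝ → Matrix β γ ℂ}
    (hA : DifferentiableFst A) (hB : DifferentiableFst B) :
    pd1 (fun x t => A x t * B x t) x t = pd1 A x t * B x t + A x t * pd1 B x t := by
  ext i j
  simp only [pd1, of_apply, Matrix.add_apply, Matrix.mul_apply]
  rw [deriv_fun_sum fun k _ => (hA t i k x).fun_mul (hB t k j x), ← Finset.sum_add_distrib]
  exact Finset.sum_congr rfl fun k _ => deriv_fun_mul (hA t i k x) (hB t k j x)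

theorem pd1_fromBlocks (A : ℝ → ℝ → Matrix α β ℂ) (B : ℝ → ℝ → Matrix α δ ℂ)
    (C : ℝ → ℝ → Matrix γ β ℂ) (D : ℝ → ℝ → Matrix γ δ ℂ) :
    pd1 (fun x t => fromBlocks (A x t) (B x t) (C x t) (D x t)) x t
      = fromBlocks (pd1 A x t) (pd1 B x t) (pd1 C x t) (pd1 D x t) := by
  ext (i | i) (j | j) <;> rfl

theorem pd2_fromBlocks (A : ℝ → ℝ → Matrix α β ℂ) (B : ℝ → ℝ → Matrix α δ ℂ)
    (C : ℝ → ℝ → Matrix γ β ℂ) (D : ℝ → ℝ → Matrix γ δ ℂ) :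
    pd2 (fun x t => fromBlocks (A x t) (B x t) (C x t) (D x t)) x t
      = fromBlocks (pd2 A x t) (pd2 B x t) (pd2 C x t) (pd2 D x t) := by
  ext (i | i) (j | j) <;> rfl

end Derivatives

theorem zeroCurvature_algebraic {R m n : Type*} [CommRing R] [Fintype m] [Fintype n]
    [DecidableEq m] (ν : R) (q qx qxx : Matrix m n R) (qb qbx qbxx : Matrix n m R) :
    fromBlocks 0 (qxx - (2 : R) • (q * qb * q)) (-qbxx + (2 : R) • (qb * q * qb)) 0
        - fromBlocks (-(qx * qb + q * qbx)) (ν • qx + qxx) (ν • qbx - qbxx) (qbx * q + qb * qx)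
      = fromBlocks (ν ^ 2 • 1 - q * qb) (ν • q + qx) (ν • qb - qbx) (qb * q)
          * fromBlocks (ν • 1) q qb 0
        - fromBlocks (ν • 1) q qb 0
          * fromBlocks (ν ^ 2 • 1 - q * qb) (ν • q + qx) (ν • qb - qbx) (qb * q) := by
  simp only [fromBlocks_multiply, sub_eq_add_neg, fromBlocks_neg, fromBlocks_add, fromBlocks_inj]
  refine ⟨?_, ?_, ?_, ?_⟩ <;>
    · simp only [Matrix.smul_mul, Matrix.mul_smul, Matrix.add_mul, Matrix.mul_add, Matrix.neg_mul,
        Matrix.mul_neg, Matrix.mul_one, Matrix.one_mul, Matrix.mul_assoc, Matrix.zero_mul,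
        Matrix.mul_zero, smul_smul]
      module

end MatrixNLS

open MatrixNLS in
theorem statement7_general (m₁ m₂ : ℕ)
    (q : ℝ → ℝ → Matrix (Fin m₁) (Fin m₂) ℂ)
    (qb : ℝ → ℝ → Matrix (Fin m₂) (Fin m₁) ℂ)
    (p : ℝ → ℝ → Matrix (Fin m₁) (Fin m₁) ℂ)
    (hq : MSmooth q) (hqb : MSmooth qb)
    (hNLS₁ : ∀ x t : ℝ, pd2 q x t = pd1 (pd1 q) x t - (2 : ℂ) • (q x t * qb x t * q x t))
    (hNLS₂ : ∀ x t : ℝ, pd2 qb x t = -(pd1 (pd1 qb) x t) + (2 : ℂ) • (qb x t * q x t * qb x t))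
    (hpx : ∀ x t : ℝ, pd1 p x t = -(q x t * qb x t))
    (ν : ℂ)
    (L M : ℝ → ℝ → Matrix (Fin m₁ ⊕ Fin m₂) (Fin m₁ ⊕ Fin m₂) ℂ)
    (hL : L = fun x t => Matrix.fromBlocks (ν • 1) (q x t) (qb x t) 0)
    (hM : M = fun x t => Matrix.fromBlocks
      (ν ^ 2 • 1 + q x t * qb x t + (2 : ℂ) • pd1 p x t)
      (ν • q x t + pd1 q x t)
      (ν • qb x t - pd1 qb x t)
      (qb x t * q x t)) :
    ∀ x t : ℝ,
      pd2 L x t - pd1 M x t = M x t * L x t - L x t * M x t := by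
  have hM_reduced : M = fun x t => fromBlocks (ν ^ 2 • 1 - q x t * qb x t) (ν • q x t + pd1 q x t)
      (ν • qb x t - pd1 qb x t) (qb x t * q x t) := by
    subst hM
    funext x t
    rw [hpx, fromBlocks_inj]
    exact ⟨by module, rfl, rfl, rfl⟩
  intro x t
  have hq₁ := hq.differentiableFst
  have hqb₁ := hqb.differentiableFst
  have hLt : pd2 L x t = fromBlocks 0 (pd2 q x t) (pd2 qb x t) 0 := by
    rw [hL, pd2_fromBlocks (fun _ _ => _) q qb (fun _ _ => _), pd2_const, pd2_const]
  have hMx : pd1 M x t = fromBlocks (-(pd1 q x t * qb x t + q x t * pd1 qb x t))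
      (ν • pd1 q x t + pd1 (pd1 q) x t) (ν • pd1 qb x t - pd1 (pd1 qb) x t)
      (pd1 qb x t * q x t + qb x t * pd1 q x t) := by
    rw [hM_reduced, pd1_fromBlocks, pd1_sub (DifferentiableFst.const _) (hq₁.mul hqb₁), pd1_const,
      zero_sub, pd1_mul hq₁ hqb₁, pd1_add (hq₁.smul ν) hq.differentiableFst_pd1,
      pd1_sub (hqb₁.smul ν) hqb.differentiableFst_pd1, pd1_smul, pd1_smul,
      pd1_mul hqb₁ hq₁]
  rw [hLt, hMx, hNLS₁, hNLS₂, hL, hM_reduced]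
  exact zeroCurvature_algebraic ..

theorem statement7 (m₁ m₂ : ℕ) (hm₁ : 0 < m₁) (hm₂ : 0 < m₂)
    (q : ℝ → ℝ → Matrix (Fin m₁) (Fin m₂) ℂ)
    (qb : ℝ → ℝ → Matrix (Fin m₂) (Fin m₁) ℂ)
    (p : ℝ → ℝ → Matrix (Fin m₁) (Fin m₁) ℂ)
    (hq : MSmooth q) (hqb : MSmooth qb) (hp : MSmooth p)
    (hNLS₁ : ∀ x t : ℝ, pd2 q x t = pd1 (pd1 q) x t - (2 : ℂ) • (q x t * qb x t * q x t))
    (hNLS₂ : ∀ x t : ℝ, pd2 qb x t = -(pd1 (pd1 qb) x t) + (2 : ℂ) • (qb x t * q x t * qb x t))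
    (hpx : ∀ x t : ℝ, pd1 p x t = -(q x t * qb x t))
    (ν : ℂ)
    (L M : ℝ → ℝ → Matrix (Fin m₁ ⊕ Fin m₂) (Fin m₁ ⊕ Fin m₂) ℂ)
    (hL : L = fun x t => Matrix.fromBlocks (ν • 1) (q x t) (qb x t) 0)
    (hM : M = fun x t => Matrix.fromBlocks
      (ν ^ 2 • 1 + q x t * qb x t + (2 : ℂ) • pd1 p x t)
      (ν • q x t + pd1 q x t)
      (ν • qb x t - pd1 qb x t)
      (qb x t * q x t)) :
    ∀ x t : ℝ,
      pd2 L x t - pd1 M x t = M x t * L x t - L x t * M x t :=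
  statement7_general m₁ m₂ q qb p hq hqb hNLS₁ hNLS₂ hpx ν L M hL hM
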